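/- arXiv:1912.05716 — 5 statements merged into one kernel-verified Lean document; each statement's English description precedes it below -/
import Mathlib

section
/- (Babuška–Nečas well-posedness.) Suppose b satisfies the inf-sup condition with constant γ > 0, and let l : V → ℂ be a bounded antilinear functional satisfying the compatibility condition l(v) = 0 for all v ∈ V₀ := { v ∈ V : b(u, v) = 0 for all u ∈ U }. Then there exists a unique u ∈ U such that b(u, v) = l(v) for all v ∈ V, and it satisfies ‖u‖_U ≤ γ^{-1} ‖l‖_{V'}, where ‖l‖_{V'} := sup_{0 ≠ v ∈ V} |l(v)|/‖v‖_V. -/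
open InnerProductSpace

/-- (Babuška–Nečas well-posedness.) Suppose `b` satisfies the inf-sup
condition with constant `γ > 0`, and let `l : V → ℂ` be a bounded antilinear functional
satisfying the compatibility condition `l(v) = 0` for all `v ∈ V₀ := {v ∈ V : b(u,v) = 0
for all u ∈ U}`. Then there exists a unique `u ∈ U` with `b(u, v) = l(v)` for all `v ∈ V`,
and it satisfies `‖u‖_U ≤ γ⁻¹ ‖l‖_{V'}`, where `‖l‖_{V'} = sup_{0 ≠ v ∈ V} |l(v)|/‖v‖_V`. -/
theorem babuska_necas_well_posedness
    {U V : Type*}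
    [NormedAddCommGroup U] [InnerProductSpace ℂ U] [CompleteSpace U]
    [NormedAddCommGroup V] [InnerProductSpace ℂ V] [CompleteSpace V]
    (b : U →ₗ[ℂ] V →ₗ⋆[ℂ] ℂ)
    (M : ℝ) (hM : 0 < M)
    (hb : ∀ (u : U) (v : V), ‖b u v‖ ≤ M * ‖u‖ * ‖v‖)
    (γ : ℝ) (hγ : 0 < γ)
    (hinfsup : ∀ u : U, γ * ‖u‖ ≤ ⨆ v : {v : V // v ≠ 0}, ‖b u (v : V)‖ / ‖(v : V)‖)
    (l : V →L⋆[ℂ] ℂ)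
    (hcompat : ∀ v : V, (∀ u : U, b u v = 0) → l v = 0) :
    (∃! u : U, ∀ v : V, b u v = l v) ∧
    ∀ u : U, (∀ v : V, b u v = l v) →
      ‖u‖ ≤ γ⁻¹ * ⨆ v : {v : V // v ≠ 0}, ‖l (v : V)‖ / ‖(v : V)‖ := by
  classical
  -- the linear functional v ↦ conj (b u v)
  let f : U → (V →L[ℂ] ℂ) := fun u =>
    LinearMap.mkContinuous
      { toFun := fun v => (starRingEnd ℂ) (b u v)
        map_add' := by intro x y; simp
        map_smul' := by
          intro c v
          simp only [LinearMap.map_smulₛₗ, smul_eq_mul, map_mul, Complex.conj_conj,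
            RingHom.id_apply] }
      (M * ‖u‖)
      (fun v => by simpa using hb u v)
  -- T : U → V with b u v = ⟪v, T u⟫
  let T : U → V := fun u => (toDual ℂ V).symm (f u)
  have hT : ∀ u v, b u v = ⟪v, T u⟫_ℂ := by
    intro u v
    have h1 : ⟪T u, v⟫_ℂ = (starRingEnd ℂ) (b u v) := toDual_symm_apply
    calc b u v = (starRingEnd ℂ) ((starRingEnd ℂ) (b u v)) := (Complex.conj_conj _).symm
      _ = (starRingEnd ℂ) ⟪T u, v⟫_ℂ := by rw [h1]
      _ = ⟪v, T u⟫_ℂ := inner_conj_symm _ _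
  -- upper bound on T
  have hTle : ∀ u, ‖T u‖ ≤ M * ‖u‖ := by
    intro u
    have : ‖T u‖ = ‖f u‖ := (toDual ℂ V).symm.norm_map (f u)
    rw [this]
    exact LinearMap.mkContinuous_norm_le _ (by positivity) _
  -- lower bound on T from inf-sup
  have hTge : ∀ u, γ * ‖u‖ ≤ ‖T u‖ := by
    intro u
    refine le_trans (hinfsup u) (Real.iSup_le ?_ (norm_nonneg _))
    rintro ⟨v, hv⟩
    rw [hT u v, div_le_iff₀ (norm_pos_iff.mpr hv)]
    exact (norm_inner_le_norm v (T u)).trans (le_of_eq (mul_comm _ _))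
  -- T as a linear map
  let Tl : U →ₗ[ℂ] V :=
    { toFun := T
      map_add' := by
        intro u u'
        refine ext_inner_left ℂ fun v => ?_
        rw [← hT, inner_add_right, ← hT, ← hT, map_add, LinearMap.add_apply]
      map_smul' := by
        intro c u
        refine ext_inner_left ℂ fun v => ?_
        rw [← hT, inner_smul_right, ← hT, map_smul, LinearMap.smul_apply, smul_eq_mul,
          RingHom.id_apply] }
  let Tc : U →L[ℂ] V := Tl.mkContinuous M (fun u => hTle u)
  -- range of T is closed
  have hanti : AntilipschitzWith (γ⁻¹).toNNReal Tc := by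
    refine AddMonoidHomClass.antilipschitz_of_bound Tc fun u => ?_
    have h := hTge u
    have : ‖u‖ ≤ γ⁻¹ * ‖Tc u‖ := by
      rw [inv_mul_eq_div, le_div_iff₀ hγ, mul_comm]
      exact h
    rwa [Real.coe_toNNReal _ (le_of_lt (inv_pos.mpr hγ))]
  have hclosed : IsClosed ((LinearMap.range Tl : Submodule ℂ V) : Set V) := by
    have : ((LinearMap.range Tl : Submodule ℂ V) : Set V) = Set.range Tc := by
      ext x; simp [Tc, LinearMap.mem_range, Set.mem_range]
    rw [this]
    exact hanti.isClosed_range Tc.uniformContinuous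
  set K : Submodule ℂ V := LinearMap.range Tl with hK
  haveI : CompleteSpace K := hclosed.completeSpace_coe
  -- Riesz representative of l
  let lf : V →L[ℂ] ℂ :=
    LinearMap.mkContinuous
      { toFun := fun v => (starRingEnd ℂ) (l v)
        map_add' := by intro x y; simp
        map_smul' := by
          intro c v
          simp only [ContinuousLinearMap.map_smulₛₗ, smul_eq_mul, map_mul, Complex.conj_conj,
            RingHom.id_apply] }
      ‖l‖ (fun v => by simpa using l.le_opNorm v)
  let w : V := (toDual ℂ V).symm lf
  have hl : ∀ v, l v = ⟪v, w⟫_ℂ := by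
    intro v
    have h1 : ⟪w, v⟫_ℂ = (starRingEnd ℂ) (l v) := toDual_symm_apply
    calc l v = (starRingEnd ℂ) ((starRingEnd ℂ) (l v)) := (Complex.conj_conj _).symm
      _ = (starRingEnd ℂ) ⟪w, v⟫_ℂ := by rw [h1]
      _ = ⟪v, w⟫_ℂ := inner_conj_symm _ _
  -- w lies in the closed range of T
  have hwK : w ∈ K := by
    rw [← Submodule.orthogonal_orthogonal K]
    rw [Submodule.mem_orthogonal]
    intro v hv
    have hbv : ∀ u : U, b u v = 0 := by
      intro u
      rw [hT u v, ← inner_conj_symm]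
      have : ⟪T u, v⟫_ℂ = 0 := (Submodule.mem_orthogonal K v).mp hv (T u) ⟨u, rfl⟩
      rw [this, map_zero]
    rw [← hl v, hcompat v hbv]
  obtain ⟨u₀, hu₀⟩ := hwK
  have hex : ∀ v : V, b u₀ v = l v := by
    intro v
    rw [hT u₀ v, hl v]
    have : T u₀ = w := hu₀
    rw [this]
  -- uniqueness
  have huniq : ∀ u u' : U, (∀ v, b u v = l v) → (∀ v, b u' v = l v) → u = u' := by
    intro u u' hu hu'
    have hzero : ∀ v : V, b (u - u') v = 0 := by
      intro v
      rw [map_sub, LinearMap.sub_apply, hu v, hu' v, sub_self]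
    have h1 : γ * ‖u - u'‖ ≤ 0 := by
      refine le_trans (hinfsup (u - u')) (Real.iSup_le ?_ le_rfl)
      rintro ⟨v, hv⟩
      rw [hzero v, norm_zero, zero_div]
    have h2 : ‖u - u'‖ = 0 := le_antisymm (nonpos_of_mul_nonpos_right h1 hγ) (norm_nonneg _)
    rw [← sub_eq_zero]
    exact norm_eq_zero.mp h2
  refine ⟨⟨u₀, hex, fun u hu => huniq u u₀ hu hex⟩, ?_⟩
  -- the stability bound
  intro u hu
  have h1 : γ * ‖u‖ ≤ ⨆ v : {v : V // v ≠ 0}, ‖l (v : V)‖ / ‖(v : V)‖ := by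
    refine le_trans (hinfsup u) (le_of_eq ?_)
    exact iSup_congr fun v => by rw [hu v]
  rw [inv_mul_eq_div, le_div_iff₀ hγ, mul_comm]
  exact h1
end

section
/- (Quasi-optimality of the ideal DPG method in the trial norm.) Suppose b satisfies the inf-sup condition with constant γ > 0, let U_h ⊆ U be a finite-dimensional subspace, and let V^opt = T(U_h). Let l : V → ℂ be a bounded antilinear functional, let u ∈ U satisfy b(u, v) = l(v) for all v ∈ V, and let u_h ∈ U_h satisfy b(u_h, v_h) = l(v_h) for all v_h ∈ V^opt. Then ‖u − u_h‖_U ≤ (M/γ) · inf_{w_h ∈ U_h} ‖u − w_h‖_U. -/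
/-! The ideal DPG solution `u_h` is the best approximation of `u` from `U_h` in the energy norm
`z ↦ ‖T z‖`: Galerkin orthogonality against `T(U_h)` makes `T(u - u_h)` orthogonal to `T(u_h - w)`,
so `‖T(u - u_h)‖ ≤ ‖T(u - w)‖` by Pythagoras. The inf-sup condition and boundedness of `b` say
exactly that `γ‖z‖ ≤ ‖T z‖ ≤ M‖z‖`, which turns this into quasi-optimality in `‖·‖_U`. -/

theorem norm_le_norm_add_of_inner_eq_zero {𝕜 E : Type*} [RCLike 𝕜] [NormedAddCommGroup E]
    [InnerProductSpace 𝕜 E] {x y : E} (h : inner 𝕜 x y = 0) : ‖x‖ ≤ ‖x + y‖ := by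
  rw [mul_self_le_mul_self_iff (norm_nonneg _) (norm_nonneg _),
    norm_add_sq_eq_norm_sq_add_norm_sq_of_inner_eq_zero x y h]
  exact le_add_of_nonneg_right (mul_self_nonneg _)

namespace TrialToTest

variable {U V : Type*} [NormedAddCommGroup U] [InnerProductSpace ℂ U]
  [NormedAddCommGroup V] [InnerProductSpace ℂ V]
  {b : U →ₗ[ℂ] V →ₗ⋆[ℂ] ℂ} {T : U →ₗ[ℂ] V}

theorem norm_apply_le (hT : ∀ (u : U) (v : V), inner ℂ v (T u) = b u v) {M : ℝ} (hM : 0 ≤ M)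
    (hb : ∀ (u : U) (v : V), ‖b u v‖ ≤ M * ‖u‖ * ‖v‖) (z : U) : ‖T z‖ ≤ M * ‖z‖ := by
  have hsq : ‖T z‖ * ‖T z‖ ≤ M * ‖z‖ * ‖T z‖ := by
    rw [← inner_self_eq_norm_mul_norm (𝕜 := ℂ), inner_self_re_eq_norm, hT]
    exact hb z (T z)
  rcases (norm_nonneg (T z)).eq_or_lt with hzero | hpos
  · rw [← hzero]
    positivity
  · exact le_of_mul_le_mul_right hsq hpos

theorem mul_norm_le_norm_apply (hT : ∀ (u : U) (v : V), inner ℂ v (T u) = b u v) {γ : ℝ} {z : U}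
    (hinfsup : γ * ‖z‖ ≤ ⨆ v : {v : V // v ≠ 0}, ‖b z (v : V)‖ / ‖(v : V)‖) :
    γ * ‖z‖ ≤ ‖T z‖ := by
  refine hinfsup.trans (Real.iSup_le (fun ⟨v, hv⟩ => ?_) (norm_nonneg _))
  rw [div_le_iff₀ (norm_pos_iff.mpr hv), ← hT, mul_comm]
  exact norm_inner_le_norm v (T z)

theorem inner_apply_sub_eq_zero (hT : ∀ (u : U) (v : V), inner ℂ v (T u) = b u v)
    {Uh : Submodule ℂ U} {l : V → ℂ} {u uh : U} (hu : ∀ v : V, b u v = l v)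
    (huheq : ∀ v ∈ Submodule.map T Uh, b uh v = l v) {z : U} (hz : z ∈ Uh) :
    inner ℂ (T (u - uh)) (T z) = 0 := by
  rw [inner_eq_zero_symm, hT, map_sub, LinearMap.sub_apply, hu, huheq _ ⟨z, hz, rfl⟩, sub_self]

theorem norm_apply_sub_le (hT : ∀ (u : U) (v : V), inner ℂ v (T u) = b u v)
    {Uh : Submodule ℂ U} {l : V → ℂ} {u uh : U} (hu : ∀ v : V, b u v = l v) (huh : uh ∈ Uh)
    (huheq : ∀ v ∈ Submodule.map T Uh, b uh v = l v) {w : U} (hw : w ∈ Uh) :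
    ‖T (u - uh)‖ ≤ ‖T (u - w)‖ := by
  have hsplit : T (u - w) = T (u - uh) + T (uh - w) := by
    rw [← map_add, sub_add_sub_cancel]
  rw [hsplit]
  exact norm_le_norm_add_of_inner_eq_zero
    (inner_apply_sub_eq_zero hT hu huheq (Uh.sub_mem huh hw))

end TrialToTest

open TrialToTest in
theorem ideal_dpg_quasi_optimality_general
    {U V : Type*}
    [NormedAddCommGroup U] [InnerProductSpace ℂ U]
    [NormedAddCommGroup V] [InnerProductSpace ℂ V]
    (b : U →ₗ[ℂ] V →ₗ⋆[ℂ] ℂ)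
    (M : ℝ) (hM : 0 < M)
    (hb : ∀ (u : U) (v : V), ‖b u v‖ ≤ M * ‖u‖ * ‖v‖)
    (T : U →ₗ[ℂ] V) (hT : ∀ (u : U) (v : V), (inner ℂ v (T u) : ℂ) = b u v)
    (γ : ℝ) (hγ : 0 < γ)
    (hinfsup : ∀ u : U, γ * ‖u‖ ≤ ⨆ v : {v : V // v ≠ 0}, ‖b u (v : V)‖ / ‖(v : V)‖)
    (Uh : Submodule ℂ U)
    (l : V →L⋆[ℂ] ℂ)
    (u : U) (hu : ∀ v : V, b u v = l v)
    (uh : U) (huh : uh ∈ Uh)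
    (huheq : ∀ v ∈ Submodule.map T Uh, b uh v = l v) :
    ‖u - uh‖ ≤ (M / γ) * ⨅ w : Uh, ‖u - (w : U)‖ := by
  have hbound (w : Uh) : ‖u - uh‖ ≤ M / γ * ‖u - (w : U)‖ := by
    rw [div_mul_eq_mul_div, le_div_iff₀ hγ, mul_comm]
    calc γ * ‖u - uh‖ ≤ ‖T (u - uh)‖ := mul_norm_le_norm_apply hT (hinfsup _)
      _ ≤ ‖T (u - w)‖ := norm_apply_sub_le hT hu huh huheq w.2
      _ ≤ M * ‖u - w‖ := norm_apply_le hT hM.le hb _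
  rw [Real.mul_iInf_of_nonneg (by positivity)]
  exact le_ciInf hbound

/-- (Quasi-optimality of the ideal DPG method in the trial norm.)
Suppose `b` satisfies the inf-sup condition with constant `γ > 0`, let `U_h ⊆ U` be a
finite-dimensional subspace and `V^opt = T(U_h)` its optimal test space, where `T` is the
trial-to-test operator defined by `(Tu, v)_V = b(u, v)` for all `v ∈ V`. If `u ∈ U` solves
`b(u, v) = l(v)` for all `v ∈ V` and `u_h ∈ U_h` solves `b(u_h, v_h) = l(v_h)` for all
`v_h ∈ V^opt`, then `‖u − u_h‖_U ≤ (M/γ) · inf_{w_h ∈ U_h} ‖u − w_h‖_U`. -/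
theorem ideal_dpg_quasi_optimality
    {U V : Type*}
    [NormedAddCommGroup U] [InnerProductSpace ℂ U] [CompleteSpace U]
    [NormedAddCommGroup V] [InnerProductSpace ℂ V] [CompleteSpace V]
    (b : U →ₗ[ℂ] V →ₗ⋆[ℂ] ℂ)
    (M : ℝ) (hM : 0 < M)
    (hb : ∀ (u : U) (v : V), ‖b u v‖ ≤ M * ‖u‖ * ‖v‖)
    (T : U →ₗ[ℂ] V) (hT : ∀ (u : U) (v : V), (inner ℂ v (T u) : ℂ) = b u v)
    (γ : ℝ) (hγ : 0 < γ)
    (hinfsup : ∀ u : U, γ * ‖u‖ ≤ ⨆ v : {v : V // v ≠ 0}, ‖b u (v : V)‖ / ‖(v : V)‖)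
    (Uh : Submodule ℂ U) [FiniteDimensional ℂ Uh]
    (l : V →L⋆[ℂ] ℂ)
    (u : U) (hu : ∀ v : V, b u v = l v)
    (uh : U) (huh : uh ∈ Uh)
    (huheq : ∀ v ∈ Submodule.map T Uh, b uh v = l v) :
    ‖u - uh‖ ≤ (M / γ) * ⨅ w : Uh, ‖u - (w : U)‖ :=
  ideal_dpg_quasi_optimality_general b M hM hb T hT γ hγ hinfsup Uh l u hu uh huh huheq
end

section
/- (Minimum residual characterization of DPG.) Let U_h ⊆ U be a finite-dimensional subspace and l : V → ℂ a bounded antilinear functional. For w ∈ U, let ψ(w) ∈ V denote the Riesz representative of the residual, i.e., the unique element with (ψ(w), v)_V = l(v) − b(w, v) for all v ∈ V. Then u_h ∈ U_h minimizes w_h ↦ ‖ψ(w_h)‖_V² over U_h if and only if (ψ(u_h), T w_h)_V = 0 for all w_h ∈ U_h, which holds if and only if b(u_h, T w_h) = l(T w_h) for all w_h ∈ U_h (i.e., u_h is the DPG solution with optimal test functions). -/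
/-!
The residual is affine in the trial function with linear part `-T`, so minimizing its norm over
`U_h` is a best-approximation problem in the subspace `T(U_h)`, solved exactly when the residual
is orthogonal to `T(U_h)`. Testing the residual equation with `v = T w` turns this orthogonality
into the DPG equations.
-/

theorem Submodule.forall_norm_le_norm_sub_iff_forall_inner_eq_zero {𝕜 E : Type*} [RCLike 𝕜]
    [NormedAddCommGroup E] [InnerProductSpace 𝕜 E] (K : Submodule 𝕜 E) (u : E) :
    (∀ w ∈ K, ‖u‖ ≤ ‖u - w‖) ↔ ∀ w ∈ K, inner 𝕜 w u = 0 := by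
  have hbdd : BddBelow (Set.range fun w : K ↦ ‖u - w‖) :=
    ⟨0, Set.forall_mem_range.2 fun _ ↦ norm_nonneg _⟩
  have hinf : ‖u‖ = ⨅ w : K, ‖u - w‖ ↔ ∀ w ∈ K, ‖u‖ ≤ ‖u - w‖ := by
    refine ⟨fun h w hw ↦ h ▸ ciInf_le hbdd ⟨w, hw⟩, fun h ↦ ?_⟩
    refine le_antisymm (le_ciInf fun w ↦ h w w.2) ?_
    simpa using ciInf_le hbdd 0
  rw [← hinf]
  simpa [inner_eq_zero_symm] using K.norm_eq_iInf_iff_inner_eq_zero (u := u) K.zero_mem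

section Residual

variable {𝕜 U V : Type*} [RCLike 𝕜] [AddCommGroup U] [Module 𝕜 U]
  [NormedAddCommGroup V] [InnerProductSpace 𝕜 V]
  {b : U →ₗ[𝕜] V →ₗ⋆[𝕜] 𝕜} {T : U → V} {l : V → 𝕜} {ψ : U → V}

theorem isLinearMap_of_inner_eq (hT : ∀ u v, inner 𝕜 v (T u) = b u v) : IsLinearMap 𝕜 T where
  map_add u w := ext_inner_left 𝕜 fun v ↦ by simp [inner_add_right, hT]
  map_smul c u := ext_inner_left 𝕜 fun v ↦ by simp [inner_smul_right, hT]

theorem residual_eq_sub (hT : ∀ u v, inner 𝕜 v (T u) = b u v)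
    (hψ : ∀ w v, inner 𝕜 v (ψ w) = l v - b w v) (w₀ w : U) :
    ψ w = ψ w₀ - T (w - w₀) :=
  ext_inner_left 𝕜 fun v ↦ by
    rw [inner_sub_right, hT, hψ, hψ, map_sub, LinearMap.sub_apply]; ring

theorem inner_residual_eq_zero_iff (hψ : ∀ w v, inner 𝕜 v (ψ w) = l v - b w v) (u : U) (v : V) :
    inner 𝕜 v (ψ u) = 0 ↔ b u v = l v := by
  rw [hψ, sub_eq_zero, eq_comm]

theorem isMinOn_norm_residual_iff (hT : ∀ u v, inner 𝕜 v (T u) = b u v)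
    (hψ : ∀ w v, inner 𝕜 v (ψ w) = l v - b w v) (S : Submodule 𝕜 U) {u : U} (hu : u ∈ S) :
    IsMinOn (fun w ↦ ‖ψ w‖) S u ↔ ∀ w ∈ S, inner 𝕜 (T w) (ψ u) = 0 := by
  set A : U →ₗ[𝕜] V := IsLinearMap.mk' T (isLinearMap_of_inner_eq hT)
  have hshift : IsMinOn (fun w ↦ ‖ψ w‖) S u ↔ ∀ d ∈ S, ‖ψ u‖ ≤ ‖ψ u - A d‖ := by
    rw [isMinOn_iff]
    refine ⟨fun h d hd ↦ ?_, fun h w hw ↦ ?_⟩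
    · simpa [A, residual_eq_sub hT hψ u (d + u)] using h (d + u) (S.add_mem hd hu)
    · simpa [A, ← residual_eq_sub hT hψ u w] using h (w - u) (S.sub_mem hw hu)
  simpa [hshift, A] using
    (S.map A).forall_norm_le_norm_sub_iff_forall_inner_eq_zero (ψ u)

end Residual

theorem dpg_minimum_residual_characterization_general
    {U V : Type*}
    [NormedAddCommGroup U] [InnerProductSpace ℂ U]
    [NormedAddCommGroup V] [InnerProductSpace ℂ V]
    (b : U →ₗ[ℂ] V →ₗ⋆[ℂ] ℂ)
    (T : U → V) (hT : ∀ (u : U) (v : V), (inner ℂ v (T u) : ℂ) = b u v)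
    (Uh : Submodule ℂ U)
    (l : V →L⋆[ℂ] ℂ)
    (ψ : U → V) (hψ : ∀ (w : U) (v : V), (inner ℂ v (ψ w) : ℂ) = l v - b w v)
    (uh : U) (huh : uh ∈ Uh) :
    ((∀ w ∈ Uh, ‖ψ uh‖ ^ 2 ≤ ‖ψ w‖ ^ 2) ↔
        (∀ w ∈ Uh, (inner ℂ (T w) (ψ uh) : ℂ) = 0)) ∧
    ((∀ w ∈ Uh, (inner ℂ (T w) (ψ uh) : ℂ) = 0) ↔
        (∀ w ∈ Uh, b uh (T w) = l (T w))) := by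
  refine ⟨?_, forall₂_congr fun w _ ↦ inner_residual_eq_zero_iff hψ uh (T w)⟩
  simp only [sq_le_sq₀ (norm_nonneg _) (norm_nonneg _)]
  simpa only [isMinOn_iff, SetLike.mem_coe] using isMinOn_norm_residual_iff hT hψ Uh huh

/-- (Minimum residual characterization of DPG.) Let `U_h ⊆ U` be a
finite-dimensional subspace and `l : V → ℂ` a bounded antilinear functional. For `w ∈ U`
let `ψ(w) ∈ V` be the Riesz representative of the residual, i.e. `(ψ(w), v)_V = l(v) −
b(w, v)` for all `v ∈ V`. Then `u_h ∈ U_h` minimizes `w_h ↦ ‖ψ(w_h)‖_V²` over `U_h` iff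
`(ψ(u_h), T w_h)_V = 0` for all `w_h ∈ U_h`, which holds iff `b(u_h, T w_h) = l(T w_h)`
for all `w_h ∈ U_h` (i.e. `u_h` is the DPG solution with optimal test functions). Here `T`
is the trial-to-test operator, `(Tu, v)_V = b(u, v)` for all `v ∈ V`; the inner product
`(w, v)_V`, linear in the first slot, is `⟪v, w⟫_ℂ` in Mathlib's convention. -/
theorem dpg_minimum_residual_characterization
    {U V : Type*}
    [NormedAddCommGroup U] [InnerProductSpace ℂ U] [CompleteSpace U]
    [NormedAddCommGroup V] [InnerProductSpace ℂ V] [CompleteSpace V]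
    (b : U →ₗ[ℂ] V →ₗ⋆[ℂ] ℂ)
    (M : ℝ) (hM : 0 < M)
    (hb : ∀ (u : U) (v : V), ‖b u v‖ ≤ M * ‖u‖ * ‖v‖)
    (T : U → V) (hT : ∀ (u : U) (v : V), (inner ℂ v (T u) : ℂ) = b u v)
    (Uh : Submodule ℂ U) [FiniteDimensional ℂ Uh]
    (l : V →L⋆[ℂ] ℂ)
    (ψ : U → V) (hψ : ∀ (w : U) (v : V), (inner ℂ v (ψ w) : ℂ) = l v - b w v)
    (uh : U) (huh : uh ∈ Uh) :
    ((∀ w ∈ Uh, ‖ψ uh‖ ^ 2 ≤ ‖ψ w‖ ^ 2) ↔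
        (∀ w ∈ Uh, (inner ℂ (T w) (ψ uh) : ℂ) = 0)) ∧
    ((∀ w ∈ Uh, (inner ℂ (T w) (ψ uh) : ℂ) = 0) ↔
        (∀ w ∈ Uh, b uh (T w) = l (T w))) :=
  dpg_minimum_residual_characterization_general b T hT Uh l ψ hψ uh huh
end

section
/- (Mixed Galerkin reformulation of DPG.) Let U_h ⊆ U be a finite-dimensional subspace and l : V → ℂ a bounded antilinear functional. A pair (u_h, ψ) ∈ U_h × V satisfies the mixed system (ψ, v)_V + b(u_h, v) = l(v) for all v ∈ V and b(w_h, ψ) = 0 for all w_h ∈ U_h, if and only if ψ is the Riesz representative of the residual at u_h (i.e., (ψ, v)_V = l(v) − b(u_h, v) for all v ∈ V) and u_h minimizes w_h ↦ ‖ψ(w_h)‖_V over U_h, where ψ(w) ∈ V is the unique element with (ψ(w), v)_V = l(v) − b(w, v) for all v ∈ V. -/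
/-!
Since `⟪v, Ψ w⟫ = l v - b w v`, the map
`B w := Ψ 0 - Ψ w` is linear and represents `b`, i.e. `⟪v, B w⟫ = b w v`, and
`Ψ w = Ψ u_h - B (w - u_h)`. Hence `u_h` minimizes `‖Ψ ·‖` over `U_h` iff `0` is a best
approximation of `Ψ u_h` in the subspace `B(U_h)`, iff `Ψ u_h ⊥ B(U_h)`, which is the second
equation of the mixed system once the first one has identified `ψ` with `Ψ u_h`.
-/

open scoped InnerProductSpace

namespace Submodule

variable {𝕜 E : Type*} [RCLike 𝕜] [NormedAddCommGroup E] [InnerProductSpace 𝕜 E]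

theorem forall_norm_le_norm_sub_iff_inner_eq_zero (K : Submodule 𝕜 E) (x : E) :
    (∀ y ∈ K, ‖x‖ ≤ ‖x - y‖) ↔ ∀ y ∈ K, ⟪x, y⟫_𝕜 = 0 := by
  have hbdd : BddBelow (Set.range fun y : K => ‖x - y‖) :=
    ⟨0, Set.forall_mem_range.2 fun _ => norm_nonneg _⟩
  have hinf_le : ⨅ y : K, ‖x - y‖ ≤ ‖x‖ := by
    simpa using ciInf_le hbdd (0 : K)
  rw [← sub_zero x, ← K.norm_eq_iInf_iff_inner_eq_zero K.zero_mem, sub_zero,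
    le_antisymm_iff, and_iff_left hinf_le, le_ciInf_iff hbdd, Subtype.forall]

end Submodule

section ResidualRepresentative

variable {𝕜 U V : Type*} [RCLike 𝕜] [AddCommGroup U] [Module 𝕜 U]
  [NormedAddCommGroup V] [InnerProductSpace 𝕜 V]
  {b : U →ₗ[𝕜] V →ₗ⋆[𝕜] 𝕜} {l : V → 𝕜} {Ψ : U → V}

theorem inner_sub_residual (hΨ : ∀ w v, ⟪v, Ψ w⟫_𝕜 = l v - b w v) (w w' : U) (v : V) :
    ⟪v, Ψ w - Ψ w'⟫_𝕜 = b (w' - w) v := by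
  rw [inner_sub_right, hΨ, hΨ, map_sub, LinearMap.sub_apply]
  ring

variable (b l Ψ) in
def residualRepr (hΨ : ∀ w v, ⟪v, Ψ w⟫_𝕜 = l v - b w v) : U →ₗ[𝕜] V where
  toFun w := Ψ 0 - Ψ w
  map_add' w w' := ext_inner_left 𝕜 fun v => by
    simp only [inner_add_right, inner_sub_residual hΨ, sub_zero, map_add, LinearMap.add_apply]
  map_smul' c w := ext_inner_left 𝕜 fun v => by
    simp only [inner_smul_right, inner_sub_residual hΨ, sub_zero, map_smul, LinearMap.smul_apply,
      smul_eq_mul, RingHom.id_apply]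

theorem inner_residualRepr (hΨ : ∀ w v, ⟪v, Ψ w⟫_𝕜 = l v - b w v) (w : U) (v : V) :
    ⟪v, residualRepr b l Ψ hΨ w⟫_𝕜 = b w v := by
  simp only [residualRepr, LinearMap.coe_mk, AddHom.coe_mk, inner_sub_residual hΨ, sub_zero]

theorem residual_eq_sub_residualRepr (hΨ : ∀ w v, ⟪v, Ψ w⟫_𝕜 = l v - b w v) (u w : U) :
    Ψ w = Ψ u - residualRepr b l Ψ hΨ (w - u) :=
  ext_inner_left 𝕜 fun v => by
    rw [inner_sub_right, inner_residualRepr, hΨ, hΨ, map_sub, LinearMap.sub_apply]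
    ring

theorem forall_norm_residual_le_iff (hΨ : ∀ w v, ⟪v, Ψ w⟫_𝕜 = l v - b w v)
    {Uh : Submodule 𝕜 U} {uh : U} (huh : uh ∈ Uh) :
    (∀ w ∈ Uh, ‖Ψ uh‖ ≤ ‖Ψ w‖) ↔ ∀ w ∈ Uh, b w (Ψ uh) = 0 := by
  set B := residualRepr b l Ψ hΨ
  calc (∀ w ∈ Uh, ‖Ψ uh‖ ≤ ‖Ψ w‖) ↔ ∀ w ∈ Uh, ‖Ψ uh‖ ≤ ‖Ψ uh - B w‖ := by
        refine ⟨fun h w hw => ?_, fun h w hw => ?_⟩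
        · have := h (w + uh) (Uh.add_mem hw huh)
          rwa [residual_eq_sub_residualRepr hΨ uh (w + uh), add_sub_cancel_right] at this
        · rw [residual_eq_sub_residualRepr hΨ uh w]
          exact h _ (Uh.sub_mem hw huh)
    _ ↔ ∀ y ∈ Uh.map B, ‖Ψ uh‖ ≤ ‖Ψ uh - y‖ := by simp
    _ ↔ ∀ y ∈ Uh.map B, ⟪Ψ uh, y⟫_𝕜 = 0 := (Uh.map B).forall_norm_le_norm_sub_iff_inner_eq_zero _
    _ ↔ ∀ w ∈ Uh, b w (Ψ uh) = 0 := by simp [B, inner_residualRepr]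

end ResidualRepresentative

theorem dpg_mixed_galerkin_reformulation_general
    {U V : Type*}
    [NormedAddCommGroup U] [InnerProductSpace ℂ U]
    [NormedAddCommGroup V] [InnerProductSpace ℂ V]
    (b : U →ₗ[ℂ] V →ₗ⋆[ℂ] ℂ)
    (Uh : Submodule ℂ U)
    (l : V →L⋆[ℂ] ℂ)
    (Ψ : U → V) (hΨ : ∀ (w : U) (v : V), (inner ℂ v (Ψ w) : ℂ) = l v - b w v)
    (uh : U) (huh : uh ∈ Uh) (ψ : V) :
    ((∀ v : V, (inner ℂ v ψ : ℂ) + b uh v = l v) ∧ (∀ w ∈ Uh, b w ψ = 0)) ↔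
      ((∀ v : V, (inner ℂ v ψ : ℂ) = l v - b uh v) ∧
        (∀ w ∈ Uh, ‖Ψ uh‖ ≤ ‖Ψ w‖)) := by
  have hresidual : (∀ v : V, (inner ℂ v ψ : ℂ) + b uh v = l v) ↔
      ∀ v : V, (inner ℂ v ψ : ℂ) = l v - b uh v :=
    forall_congr' fun v => eq_sub_iff_add_eq.symm
  rw [hresidual]
  refine and_congr_right fun hψ => ?_
  obtain rfl : ψ = Ψ uh := ext_inner_left ℂ fun v => by rw [hψ, hΨ]
  exact (forall_norm_residual_le_iff hΨ huh).symm

/-- (Mixed Galerkin reformulation of DPG.) Let `U_h ⊆ U` be a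
finite-dimensional subspace and `l : V → ℂ` a bounded antilinear functional. For `w ∈ U`
let `Ψ(w) ∈ V` denote the Riesz representative of the residual at `w`, i.e.
`(Ψ(w), v)_V = l(v) − b(w, v)` for all `v ∈ V`. A pair `(u_h, ψ) ∈ U_h × V` satisfies the
mixed system `(ψ, v)_V + b(u_h, v) = l(v)` for all `v ∈ V` and `b(w_h, ψ) = 0` for all
`w_h ∈ U_h`, iff `ψ` is the Riesz representative of the residual at `u_h` and `u_h`
minimizes `w_h ↦ ‖Ψ(w_h)‖_V` over `U_h`. The inner product `(w, v)_V`, linear in the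
first slot, is `⟪v, w⟫_ℂ` in Mathlib's convention. -/
theorem dpg_mixed_galerkin_reformulation
    {U V : Type*}
    [NormedAddCommGroup U] [InnerProductSpace ℂ U] [CompleteSpace U]
    [NormedAddCommGroup V] [InnerProductSpace ℂ V] [CompleteSpace V]
    (b : U →ₗ[ℂ] V →ₗ⋆[ℂ] ℂ)
    (M : ℝ) (hM : 0 < M)
    (hb : ∀ (u : U) (v : V), ‖b u v‖ ≤ M * ‖u‖ * ‖v‖)
    (Uh : Submodule ℂ U) [FiniteDimensional ℂ Uh]
    (l : V →L⋆[ℂ] ℂ)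
    (Ψ : U → V) (hΨ : ∀ (w : U) (v : V), (inner ℂ v (Ψ w) : ℂ) = l v - b w v)
    (uh : U) (huh : uh ∈ Uh) (ψ : V) :
    ((∀ v : V, (inner ℂ v ψ : ℂ) + b uh v = l v) ∧ (∀ w ∈ Uh, b w ψ = 0)) ↔
      ((∀ v : V, (inner ℂ v ψ : ℂ) = l v - b uh v) ∧
        (∀ w ∈ Uh, ‖Ψ uh‖ ≤ ‖Ψ w‖)) :=
  dpg_mixed_galerkin_reformulation_general b Uh l Ψ hΨ uh huh ψ
end

section
/- (Energy-norm best approximation of the ideal DPG solution.) Define the energy norm on U by ‖u‖_E := ‖Tu‖_V. Let U_h ⊆ U be a finite-dimensional subspace, let l : V → ℂ be a bounded antilinear functional, let u ∈ U satisfy b(u, v) = l(v) for all v ∈ V, and let u_h ∈ U_h satisfy b(u_h, T w_h) = l(T w_h) for all w_h ∈ U_h. Then ‖u − u_h‖_E = inf_{w_h ∈ U_h} ‖u − w_h‖_E, i.e., the ideal DPG solution is the best approximation of u from U_h in the energy norm. -/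
/-! The trial-to-test operator `T` is linear, so `‖T ·‖` is the norm of the inner product
`(x, y) ↦ ⟪T x, T y⟫`. Testing the two variational problems with `T w`, `w ∈ U_h`, gives the
Galerkin orthogonality `⟪T w, T (u - u_h)⟫ = 0`, so `u_h` is the orthogonal projection of `u`
onto `U_h` for the energy inner product, and Pythagoras makes it the best approximation. -/

section TrialToTest

variable {U V : Type*} [AddCommGroup U] [Module ℂ U]
  [NormedAddCommGroup V] [InnerProductSpace ℂ V]
  {b : U →ₗ[ℂ] V →ₗ⋆[ℂ] ℂ} {T : U → V}

theorem trialToTest_map_sub (hT : ∀ (u : U) (v : V), inner ℂ v (T u) = b u v) (x y : U) :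
    T (x - y) = T x - T y :=
  ext_inner_left ℂ fun v => by rw [inner_sub_right, hT, hT, hT, map_sub, LinearMap.sub_apply]

theorem inner_trialToTest_sub_eq_zero (hT : ∀ (u : U) (v : V), inner ℂ v (T u) = b u v)
    {x y w : U} (h : b x (T w) = b y (T w)) :
    inner ℂ (T w) (T (x - y)) = 0 := by
  rw [hT, map_sub, LinearMap.sub_apply, h, sub_self]

end TrialToTest

theorem norm_sub_le_norm_sub_of_inner_eq_zero {E : Type*} [NormedAddCommGroup E]
    [InnerProductSpace ℂ E] {x y z : E} (h : inner ℂ (y - z) (x - y) = 0) :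
    ‖x - y‖ ≤ ‖x - z‖ := by
  have hpyth := norm_add_sq_eq_norm_sq_add_norm_sq_of_inner_eq_zero _ _
    (by rw [← inner_conj_symm, h, map_zero] : inner ℂ (x - y) (y - z) = 0)
  rw [sub_add_sub_cancel] at hpyth
  exact le_of_sq_le_sq (by nlinarith [sq_nonneg ‖y - z‖]) (norm_nonneg _)

theorem ideal_dpg_energy_norm_best_approximation_general
    {U V : Type*}
    [NormedAddCommGroup U] [InnerProductSpace ℂ U]
    [NormedAddCommGroup V] [InnerProductSpace ℂ V]
    (b : U →ₗ[ℂ] V →ₗ⋆[ℂ] ℂ)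
    (T : U → V) (hT : ∀ (u : U) (v : V), (inner ℂ v (T u) : ℂ) = b u v)
    (Uh : Submodule ℂ U)
    (l : V →L⋆[ℂ] ℂ)
    (u : U) (hu : ∀ v : V, b u v = l v)
    (uh : U) (huh : uh ∈ Uh)
    (hdpg : ∀ w ∈ Uh, b uh (T w) = l (T w)) :
    ‖T (u - uh)‖ = ⨅ w : Uh, ‖T (u - (w : U))‖ := by
  have hT_sub := trialToTest_map_sub hT
  have hbest : ∀ wh : Uh, ‖T (u - uh)‖ ≤ ‖T (u - (wh : U))‖ := by
    intro wh
    have horth := inner_trialToTest_sub_eq_zero hT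
      (w := uh - wh) ((hu _).trans (hdpg _ (Uh.sub_mem huh wh.2)).symm)
    simp only [hT_sub] at horth ⊢
    exact norm_sub_le_norm_sub_of_inner_eq_zero horth
  have hleast : IsLeast (Set.range fun w : Uh => ‖T (u - (w : U))‖) ‖T (u - uh)‖ :=
    ⟨⟨⟨uh, huh⟩, rfl⟩, by rintro _ ⟨w, rfl⟩; exact hbest w⟩
  exact hleast.isGLB.ciInf_eq.symm

/-- (Energy-norm best approximation of the ideal DPG solution.) Define
the energy norm on `U` by `‖u‖_E := ‖Tu‖_V`, where `T` is the trial-to-test operator,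
`(Tu, v)_V = b(u, v)` for all `v ∈ V`. Let `U_h ⊆ U` be a finite-dimensional subspace,
let `u ∈ U` solve `b(u, v) = l(v)` for all `v ∈ V`, and let `u_h ∈ U_h` solve
`b(u_h, T w_h) = l(T w_h)` for all `w_h ∈ U_h`. Then
`‖u − u_h‖_E = inf_{w_h ∈ U_h} ‖u − w_h‖_E`, i.e. the ideal DPG solution is the best
approximation of `u` from `U_h` in the energy norm. -/
theorem ideal_dpg_energy_norm_best_approximation
    {U V : Type*}
    [NormedAddCommGroup U] [InnerProductSpace ℂ U] [CompleteSpace U]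
    [NormedAddCommGroup V] [InnerProductSpace ℂ V] [CompleteSpace V]
    (b : U →ₗ[ℂ] V →ₗ⋆[ℂ] ℂ)
    (M : ℝ) (hM : 0 < M)
    (hb : ∀ (u : U) (v : V), ‖b u v‖ ≤ M * ‖u‖ * ‖v‖)
    (T : U → V) (hT : ∀ (u : U) (v : V), (inner ℂ v (T u) : ℂ) = b u v)
    (Uh : Submodule ℂ U) [FiniteDimensional ℂ Uh]
    (l : V →L⋆[ℂ] ℂ)
    (u : U) (hu : ∀ v : V, b u v = l v)
    (uh : U) (huh : uh ∈ Uh)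
    (hdpg : ∀ w ∈ Uh, b uh (T w) = l (T w)) :
    ‖T (u - uh)‖ = ⨅ w : Uh, ‖T (u - (w : U))‖ :=
  ideal_dpg_energy_norm_best_approximation_general b T hT Uh l u hu uh huh hdpg
end
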